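/- arXiv:2403.18931 — 4 statements merged into one kernel-verified Lean document; each statement's English description precedes it below -/
import Mathlib

section
/- Let d ≥ 1 and let U_1, …, U_d ∈ M_n(ℂ) be unitary matrices, and let γ_1, …, γ_{d+1} ∈ M_{d'}(ℂ) be a selfadjoint Clifford family. Then the Hermitian matrix G = ∑_{j=1}^d Im(U_j) ⊗ γ_j + ((d−1)·1 − ∑_{j=1}^d Re(U_j)) ⊗ γ_{d+1} satisfies G² ≥ (1 − 7·∑_{1≤j<i≤d} ‖U_jU_i − U_iU_j‖)·1 in the Loewner order. In particular, if ‖U_jU_i − U_iU_j‖ ≤ δ for all i ≠ j and 1 − 7δ·d(d−1)/2 > 0, then G is invertible. -/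
/-!
Write `Bⱼ = Im Uⱼ ⊗ γⱼ + (1 - Re Uⱼ) ⊗ γ_{d+1}` and `E = 1 ⊗ γ_{d+1}`, so that `G = ∑ Bⱼ - E`.
Because `Uⱼ` is unitary, `Re Uⱼ` and `Im Uⱼ` commute and `Re² + Im² = 1`; together with the
Clifford relations this gives `Bⱼ² = BⱼE + EBⱼ` and `E² = 1`, hence
`G² = 1 + ∑_{j<i} (BⱼBᵢ + BᵢBⱼ)`.

Each anticommutator `BⱼBᵢ + BᵢBⱼ` is the sum of three terms `[X, Y] ⊗ γγ'` with `X, Y` taken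
from `Im Uⱼ, 1 - Re Uⱼ, Im Uᵢ, 1 - Re Uᵢ`; these are selfadjoint (skew ⊗ skew) and of norm at
most `δ = ‖UⱼUᵢ - UᵢUⱼ‖`. The remaining term is `{1 - Re Uⱼ, 1 - Re Uᵢ} ⊗ 1`, and writing
`1 - Re Uᵢ = ½ V⋆V` with `V = 1 - Uᵢ` shows that it equals `V⋆(1 - Re Uⱼ)V ≥ 0` up to an error
of norm at most `2δ`. So every anticommutator is `≥ -5δ`, which gives the bound on `G²` (even
with `5` in place of `7`). Invertibility follows because `G²` is then strictly positive.
-/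

open Matrix
open scoped Kronecker Matrix.Norms.L2Operator ComplexOrder

noncomputable section

/-- The "real part" `(A + A*)/2` of a square complex matrix. -/
def mRe {n : ℕ} (A : Matrix (Fin n) (Fin n) ℂ) : Matrix (Fin n) (Fin n) ℂ :=
  (1/2 : ℂ) • (A + Aᴴ)

/-- The "imaginary part" `(A - A*)/(2i)` of a square complex matrix. -/
def mIm {n : ℕ} (A : Matrix (Fin n) (Fin n) ℂ) : Matrix (Fin n) (Fin n) ℂ :=
  (1/(2 * Complex.I) : ℂ) • (A - Aᴴ)

open scoped MatrixOrder ComplexStarModule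

lemma mRe_eq_realPart {n : ℕ} (A : Matrix (Fin n) (Fin n) ℂ) : mRe A = ℜ A := by
  rw [mRe, realPart_apply_coe, RCLike.real_smul_eq_coe_smul (K := ℂ), star_eq_conjTranspose]
  norm_num

lemma mIm_eq_imaginaryPart {n : ℕ} (A : Matrix (Fin n) (Fin n) ℂ) : mIm A = ℑ A := by
  rw [mIm, imaginaryPart_apply_coe, RCLike.real_smul_eq_coe_smul (K := ℂ), star_eq_conjTranspose,
    smul_smul]
  congr 1
  push_cast
  field_simp
  simp

lemma IsSelfAdjoint.mem_unitary_of_mul_self {R : Type*} [Monoid R] [StarMul R] {g : R}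
    (hg : IsSelfAdjoint g) (h : g * g = 1) : g ∈ unitary R :=
  Unitary.mem_iff.2 ⟨hg.star_eq.symm ▸ h, hg.star_eq.symm ▸ h⟩

section StarAlgebra
variable {A : Type*} [Ring A] [StarRing A] [Algebra ℂ A] [StarModule ℂ A] {u : A}

lemma star_one_sub_mul_one_sub_of_mem_unitary (hu : u ∈ unitary A) :
    star (1 - u) * (1 - u) = (2 : ℝ) • (1 - (ℜ u : A)) := by
  rw [realPart_apply_coe, smul_sub, smul_smul, mul_inv_cancel₀ two_ne_zero, one_smul, star_sub,
    star_one, sub_mul, mul_sub, mul_sub, Unitary.star_mul_self_of_mem hu, two_smul]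
  noncomm_ring

lemma imaginaryPart_mul_self_add_one_sub_realPart_mul_self (hu : u ∈ unitary A) :
    (ℑ u : A) * ℑ u + (1 - ℜ u) * (1 - ℜ u) = (1 - ℜ u) + (1 - ℜ u) := by
  obtain ⟨-, h⟩ := mem_unitary_iff_isStarNormal_and_realPart_sq_add_imaginaryPart_sq_eq_one.1 hu
  rw [sq, sq] at h
  rw [eq_sub_of_add_eq' h]
  noncomm_ring

end StarAlgebra

theorem Fintype.sum_sum_eq_sum_add_sum_lt {ι M : Type*} [Fintype ι] [LinearOrder ι]
    [AddCommMonoid M] (f : ι → ι → M) :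
    ∑ i, ∑ j, f i j = ∑ i, f i i +
      ∑ q ∈ Finset.univ.filter (fun q : ι × ι => q.1 < q.2), (f q.1 q.2 + f q.2 q.1) := by
  have hsplit : ∀ i j, f i j = (if i < j then f i j else 0) + (if j < i then f i j else 0) +
      (if i = j then f i j else 0) := by
    intro i j
    rcases lt_trichotomy i j with h | rfl | h
    · simp [h, h.not_gt, h.ne]
    · simp
    · simp [h, h.not_gt, h.ne']
  have hswap : ∑ i, ∑ j, (if j < i then f i j else 0) = ∑ i, ∑ j, (if i < j then f j i else 0) :=
    Finset.sum_comm
  rw [Finset.sum_congr rfl fun i _ => Finset.sum_congr rfl fun j _ => hsplit i j]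
  simp only [Finset.sum_add_distrib, Finset.sum_ite_eq, Finset.mem_univ, if_true, hswap,
    Finset.sum_filter, ← Finset.univ_product_univ, Finset.sum_product]
  abel

theorem sum_sub_mul_self_eq_one_add_sum_lt {ι R : Type*} [Fintype ι] [LinearOrder ι] [Ring R]
    (b : ι → R) {e : R} (he : e * e = 1) (hb : ∀ i, b i * b i = b i * e + e * b i) :
    (∑ i, b i - e) * (∑ i, b i - e) = 1 +
      ∑ q ∈ Finset.univ.filter (fun q : ι × ι => q.1 < q.2), (b q.1 * b q.2 + b q.2 * b q.1) := by
  have hsq : (∑ i, b i) * (∑ i, b i) = (∑ i, b i) * e + e * ∑ i, b i +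
      ∑ q ∈ Finset.univ.filter (fun q : ι × ι => q.1 < q.2), (b q.1 * b q.2 + b q.2 * b q.1) := by
    rw [Finset.sum_mul_sum, Fintype.sum_sum_eq_sum_add_sum_lt, Finset.sum_mul, Finset.mul_sum,
      ← Finset.sum_add_distrib]
    simp_rw [hb]
  rw [sub_mul, mul_sub, mul_sub, hsq, he]
  abel

lemma Fin.sum_filter_lt_le {d : ℕ} (f : Fin d → Fin d → ℝ) {δ : ℝ}
    (h : ∀ i j, i ≠ j → f i j ≤ δ) :
    ∑ q ∈ Finset.univ.filter (fun q : Fin d × Fin d => q.1 < q.2), f q.1 q.2 ≤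
      δ * (d * (d - 1) / 2) :=
  calc _ ≤ (Finset.univ.filter (fun q : Fin d × Fin d => q.1 < q.2)).card • δ :=
        Finset.sum_le_card_nsmul _ _ _ fun q hq => h _ _ (Finset.mem_filter.1 hq).2.ne
    _ = δ * (d * (d - 1) / 2) := by
        rw [nsmul_eq_mul, ← Finset.univ_product_univ, Finset.card_product_filter_lt,
          Finset.card_univ, Fintype.card_fin, Nat.cast_choose_two, mul_comm]

section CStarAlgebra
variable {A : Type*} [CStarAlgebra A] {u w : A}

lemma norm_le_one_of_mem_unitary (hu : u ∈ unitary A) : ‖u‖ ≤ 1 := by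
  rcases subsingleton_or_nontrivial A with hA | hA
  · simp [Subsingleton.elim u 0]
  · exact (CStarRing.norm_of_mem_unitary hu).le

lemma norm_lie_star_of_mem_unitary (hu : u ∈ unitary A) (x : A) :
    ‖⁅star u, x⁆‖ = ‖⁅u, x⁆‖ := by
  have hconj : ⁅star u, x⁆ = star u * ⁅x, u⁆ * star u := by
    simp only [Ring.lie_def, mul_sub, sub_mul, mul_assoc, Unitary.mul_star_self_of_mem hu,
      ← mul_assoc (star u) u, Unitary.star_mul_self_of_mem hu, one_mul, mul_one]
  rw [hconj, CStarRing.norm_mul_mem_unitary _ (Unitary.star_mem hu),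
    CStarRing.norm_mem_unitary_mul _ (Unitary.star_mem hu), Ring.lie_def, Ring.lie_def,
    norm_sub_rev]

lemma norm_lie_realPart_le (hu : u ∈ unitary A) (x : A) : ‖⁅(ℜ u : A), x⁆‖ ≤ ‖⁅u, x⁆‖ := by
  have h : ⁅(ℜ u : A), x⁆ = (2 : ℝ)⁻¹ • (⁅u, x⁆ + ⁅star u, x⁆) := by
    simp only [realPart_apply_coe, Ring.lie_def, smul_mul_assoc, mul_smul_comm, ← smul_sub]
    noncomm_ring
  rw [h, norm_smul, norm_inv, Real.norm_two]
  linarith [norm_add_le ⁅u, x⁆ ⁅star u, x⁆, norm_lie_star_of_mem_unitary hu x]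

lemma norm_lie_imaginaryPart_le (hu : u ∈ unitary A) (x : A) : ‖⁅(ℑ u : A), x⁆‖ ≤ ‖⁅u, x⁆‖ := by
  have h : ⁅(ℑ u : A), x⁆ = -Complex.I • (2 : ℝ)⁻¹ • (⁅u, x⁆ - ⁅star u, x⁆) := by
    simp only [imaginaryPart_apply_coe, Ring.lie_def, smul_mul_assoc, mul_smul_comm, ← smul_sub]
    noncomm_ring
  rw [h, norm_smul, norm_smul, norm_neg, Complex.norm_I, norm_inv, Real.norm_two, one_mul]
  linarith [norm_sub_le ⁅u, x⁆ ⁅star u, x⁆, norm_lie_star_of_mem_unitary hu x]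

lemma norm_lie_one_sub_realPart_le (hu : u ∈ unitary A) (x : A) :
    ‖⁅1 - (ℜ u : A), x⁆‖ ≤ ‖⁅u, x⁆‖ := by
  have h : ⁅1 - (ℜ u : A), x⁆ = -⁅(ℜ u : A), x⁆ := by simp only [Ring.lie_def]; noncomm_ring
  exact h ▸ (norm_neg _).trans_le (norm_lie_realPart_le hu x)

lemma norm_lie_le_of_forall_norm_lie_le {x y : A} (hx : ∀ z : A, ‖⁅x, z⁆‖ ≤ ‖⁅u, z⁆‖)
    (hy : ∀ z : A, ‖⁅y, z⁆‖ ≤ ‖⁅w, z⁆‖) : ‖⁅x, y⁆‖ ≤ ‖⁅u, w⁆‖ :=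
  calc ‖⁅x, y⁆‖ = ‖⁅y, x⁆‖ := by rw [Ring.lie_def, Ring.lie_def, norm_sub_rev]
    _ ≤ ‖⁅w, x⁆‖ := hy x
    _ = ‖⁅x, w⁆‖ := by rw [Ring.lie_def, Ring.lie_def, norm_sub_rev]
    _ ≤ ‖⁅u, w⁆‖ := hx w

variable [PartialOrder A] [StarOrderedRing A]

lemma neg_algebraMap_le_of_norm_le {a : A} (ha : IsSelfAdjoint a) {r : ℝ} (hr : ‖a‖ ≤ r) :
    -algebraMap ℝ A r ≤ a :=
  (neg_le_neg (algebraMap_mono A hr)).trans ha.neg_algebraMap_norm_le_self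

/-- The right side is `v⋆ s v ≥ 0` up to an error of norm at most `‖v‖ ‖⁅v, s⁆‖`. -/
lemma neg_algebraMap_le_half_anticomm {s : A} (hs : 0 ≤ s) (v : A) :
    -algebraMap ℝ A (‖v‖ * ‖⁅v, s⁆‖) ≤ (2 : ℝ)⁻¹ • (s * (star v * v) + star v * v * s) := by
  set e : A := star ⁅v, s⁆ * v + star v * ⁅v, s⁆
  have hdecomp : (2 : ℝ)⁻¹ • (s * (star v * v) + star v * v * s)
      = star v * s * v + (2 : ℝ)⁻¹ • e := by
    have : s * (star v * v) + star v * v * s = (2 : ℝ) • (star v * s * v) + e := by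
      simp only [e, Ring.lie_def, star_sub, star_mul, (IsSelfAdjoint.of_nonneg hs).star_eq,
        two_smul]
      noncomm_ring
    rw [this, smul_add, smul_smul, inv_mul_cancel₀ two_ne_zero, one_smul]
  have he : IsSelfAdjoint ((2 : ℝ)⁻¹ • e) := by
    refine .smul (by simp) ?_
    rw [IsSelfAdjoint, star_add, star_mul, star_mul, star_star, star_star, add_comm]
  have hnorm : ‖(2 : ℝ)⁻¹ • e‖ ≤ ‖v‖ * ‖⁅v, s⁆‖ := by
    have h₁ := norm_add_le (star ⁅v, s⁆ * v) (star v * ⁅v, s⁆)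
    have h₂ := norm_mul_le (star ⁅v, s⁆) v
    have h₃ := norm_mul_le (star v) ⁅v, s⁆
    rw [norm_star] at h₂ h₃
    rw [norm_smul, norm_inv, Real.norm_two]
    linarith
  rw [hdecomp]
  exact (neg_algebraMap_le_of_norm_le he hnorm).trans
    (le_add_of_nonneg_left (star_left_conjugate_nonneg hs v))

lemma one_sub_realPart_nonneg (hu : u ∈ unitary A) : 0 ≤ 1 - (ℜ u : A) := by
  have h := star_one_sub_mul_one_sub_of_mem_unitary hu
  rw [← inv_smul_eq_iff₀ two_ne_zero] at h
  exact h ▸ smul_nonneg (by norm_num) (star_mul_self_nonneg _)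

lemma neg_algebraMap_le_anticomm_one_sub_realPart (hu : u ∈ unitary A) (hw : w ∈ unitary A) :
    -algebraMap ℝ A (2 * ‖⁅u, w⁆‖) ≤
      (1 - (ℜ u : A)) * (1 - ℜ w) + (1 - ℜ w) * (1 - ℜ u) := by
  have h := neg_algebraMap_le_half_anticomm (one_sub_realPart_nonneg hu) (1 - w)
  have hlie : ‖⁅1 - w, 1 - (ℜ u : A)⁆‖ ≤ ‖⁅u, w⁆‖ := by
    have : ⁅1 - w, 1 - (ℜ u : A)⁆ = -⁅(ℜ u : A), w⁆ := by simp only [Ring.lie_def]; noncomm_ring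
    exact this ▸ (norm_neg _).trans_le (norm_lie_realPart_le hu w)
  have hnorm : ‖1 - w‖ ≤ 2 := by
    linarith [norm_sub_le (1 : A) w, norm_le_one_of_mem_unitary (one_mem (unitary A)),
      norm_le_one_of_mem_unitary hw]
  rw [star_one_sub_mul_one_sub_of_mem_unitary hw, mul_smul_comm, smul_mul_assoc, ← smul_add,
    smul_smul, inv_mul_cancel₀ two_ne_zero, one_smul] at h
  exact (neg_le_neg (algebraMap_mono A (mul_le_mul hnorm hlie (norm_nonneg _) zero_le_two))).trans h

end CStarAlgebra

namespace Matrix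

section Kronecker
variable {l m n p α : Type*} [CommRing α]

lemma sub_kronecker (A A' : Matrix l m α) (B : Matrix n p α) :
    (A - A') ⊗ₖ B = A ⊗ₖ B - A' ⊗ₖ B :=
  (kroneckerBilinear (R := α)).map_sub₂ A A' B

lemma kronecker_sub (A : Matrix l m α) (B B' : Matrix n p α) :
    A ⊗ₖ (B - B') = A ⊗ₖ B - A ⊗ₖ B' :=
  ((kroneckerBilinear (R := α)) A).map_sub B B'

lemma neg_kronecker (A : Matrix l m α) (B : Matrix n p α) : (-A) ⊗ₖ B = -(A ⊗ₖ B) :=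
  (kroneckerBilinear (R := α)).map_neg₂ A B

lemma kronecker_neg (A : Matrix l m α) (B : Matrix n p α) : A ⊗ₖ (-B) = -(A ⊗ₖ B) :=
  ((kroneckerBilinear (R := α)) A).map_neg B

lemma sum_kronecker {ι : Type*} (s : Finset ι) (A : ι → Matrix l m α) (B : Matrix n p α) :
    (∑ i ∈ s, A i) ⊗ₖ B = ∑ i ∈ s, A i ⊗ₖ B :=
  (kroneckerBilinear (R := α)).map_sum₂ s A B

lemma isSelfAdjoint_kronecker_of_star_eq_neg [StarRing α] {A : Matrix m m α}
    {B : Matrix p p α} (hA : star A = -A) (hB : star B = -B) : IsSelfAdjoint (A ⊗ₖ B) := by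
  rw [IsSelfAdjoint, star_eq_conjTranspose, conjTranspose_kronecker, ← star_eq_conjTranspose,
    ← star_eq_conjTranspose, hA, hB, kronecker_neg, neg_kronecker, neg_neg]

variable [Fintype m] [Fintype p]

lemma kronecker_mul_add_mul_of_anticomm (A A' : Matrix m m α) {g g' : Matrix p p α}
    (h : g' * g = -(g * g')) :
    A ⊗ₖ g * A' ⊗ₖ g' + A' ⊗ₖ g' * A ⊗ₖ g = ⁅A, A'⁆ ⊗ₖ (g * g') := by
  rw [← mul_kronecker_mul, ← mul_kronecker_mul, h, kronecker_neg, Ring.lie_def, sub_kronecker,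
    sub_eq_add_neg]

lemma kronecker_mul_add_mul_of_mul_self [DecidableEq p] (A A' : Matrix m m α) {g : Matrix p p α}
    (h : g * g = 1) :
    A ⊗ₖ g * A' ⊗ₖ g + A' ⊗ₖ g * A ⊗ₖ g = (A * A' + A' * A) ⊗ₖ 1 := by
  rw [← mul_kronecker_mul, ← mul_kronecker_mul, h, add_kronecker]

end Kronecker

section KroneckerOrder
variable {m p 𝕜 : Type*} [Fintype m] [Fintype p] [RCLike 𝕜]

lemma kronecker_mono_left {A A' : Matrix m m 𝕜} {B : Matrix p p 𝕜} (h : A ≤ A') (hB : 0 ≤ B) :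
    A ⊗ₖ B ≤ A' ⊗ₖ B := by
  rw [le_iff, ← sub_kronecker]
  exact (le_iff.mp h).kronecker hB.posSemidef

lemma kronecker_mono_right {A : Matrix m m 𝕜} {B B' : Matrix p p 𝕜} (hA : 0 ≤ A) (h : B ≤ B') :
    A ⊗ₖ B ≤ A ⊗ₖ B' := by
  rw [le_iff, ← kronecker_sub]
  exact hA.posSemidef.kronecker (le_iff.mp h)

variable [DecidableEq m] [DecidableEq p]

lemma algebraMap_kronecker_algebraMap (r s : ℝ) :
    algebraMap ℝ (Matrix m m 𝕜) r ⊗ₖ algebraMap ℝ (Matrix p p 𝕜) s =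
      algebraMap ℝ (Matrix (m × p) (m × p) 𝕜) (r * s) := by
  simp only [Algebra.algebraMap_eq_smul_one, smul_kronecker, kronecker_smul, one_kronecker_one,
    smul_smul, mul_comm s]

lemma l2_opNorm_kronecker_le (A : Matrix m m ℂ) (B : Matrix p p ℂ) :
    ‖A ⊗ₖ B‖ ≤ ‖A‖ * ‖B‖ := by
  have h : star (A ⊗ₖ B) * (A ⊗ₖ B) ≤ algebraMap ℝ _ ((‖A‖ * ‖B‖) ^ 2) :=
    calc star (A ⊗ₖ B) * (A ⊗ₖ B) = (star A * A) ⊗ₖ (star B * B) := by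
          simp only [star_eq_conjTranspose, conjTranspose_kronecker, mul_kronecker_mul]
      _ ≤ algebraMap ℝ _ (‖A‖ ^ 2) ⊗ₖ (star B * B) :=
          kronecker_mono_left CStarAlgebra.star_mul_le_algebraMap_norm_sq (star_mul_self_nonneg _)
      _ ≤ algebraMap ℝ _ (‖A‖ ^ 2) ⊗ₖ algebraMap ℝ _ (‖B‖ ^ 2) :=
          kronecker_mono_right (algebraMap_nonneg _ (sq_nonneg _))
            CStarAlgebra.star_mul_le_algebraMap_norm_sq
      _ = _ := by rw [algebraMap_kronecker_algebraMap, mul_pow]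
  rw [← CStarAlgebra.norm_le_iff_le_algebraMap _ (by positivity) (star_mul_self_nonneg _),
    CStarRing.norm_star_mul_self, ← sq] at h
  exact (pow_le_pow_iff_left₀ (norm_nonneg _) (by positivity) two_ne_zero).1 h

lemma neg_algebraMap_le_lie_kronecker_mul {X Y : Matrix m m ℂ} (hX : IsSelfAdjoint X)
    (hY : IsSelfAdjoint Y) {g g' : Matrix p p ℂ} (hg : IsSelfAdjoint g) (hg' : IsSelfAdjoint g')
    (hgg : g * g = 1) (hg'g' : g' * g' = 1) (hanti : g' * g = -(g * g')) {r : ℝ}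
    (hr : ‖⁅X, Y⁆‖ ≤ r) :
    -algebraMap ℝ _ r ≤ ⁅X, Y⁆ ⊗ₖ (g * g') := by
  have hskew : star ⁅X, Y⁆ = -⁅X, Y⁆ := by
    rw [Ring.lie_def, star_sub, star_mul, star_mul, hX.star_eq, hY.star_eq, neg_sub]
  have hskew' : star (g * g') = -(g * g') := by rw [star_mul, hg.star_eq, hg'.star_eq, hanti]
  have hunit : g * g' ∈ unitary (Matrix p p ℂ) :=
    mul_mem (hg.mem_unitary_of_mul_self hgg) (hg'.mem_unitary_of_mul_self hg'g')
  refine neg_algebraMap_le_of_norm_le (isSelfAdjoint_kronecker_of_star_eq_neg hskew hskew') ?_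
  calc ‖⁅X, Y⁆ ⊗ₖ (g * g')‖ ≤ ‖⁅X, Y⁆‖ * ‖g * g'‖ := l2_opNorm_kronecker_le _ _
    _ ≤ r * 1 := mul_le_mul hr (norm_le_one_of_mem_unitary hunit) (norm_nonneg _)
        ((norm_nonneg _).trans hr)
    _ = r := mul_one r

lemma isUnit_of_algebraMap_le_mul_self {M : Matrix m m ℂ} {r : ℝ} (hr : 0 < r)
    (h : algebraMap ℝ _ r ≤ M * M) : IsUnit M := by
  have hMM : IsUnit (M * M) := ((isStrictlyPositive_algebraMap hr).of_le h).isUnit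
  rw [isUnit_iff_isUnit_det, det_mul] at hMM
  exact (isUnit_iff_isUnit_det M).2 (isUnit_of_mul_isUnit_left hMM)

end KroneckerOrder

end Matrix

section CliffordTerm
variable {m p : Type*} [DecidableEq m]

/-- The summand `Bⱼ` of `G = ∑ⱼ Bⱼ - 1 ⊗ γ_{d+1}`, with `u = Uⱼ`, `a = γⱼ`, `c = γ_{d+1}`. -/
def cliffordTerm (u : Matrix m m ℂ) (a c : Matrix p p ℂ) : Matrix (m × p) (m × p) ℂ :=
  (ℑ u : Matrix m m ℂ) ⊗ₖ a + (1 - (ℜ u : Matrix m m ℂ)) ⊗ₖ c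

lemma sum_cliffordTerm_sub_one_kronecker {ι : Type*} [Fintype ι] (U : ι → Matrix m m ℂ)
    (a : ι → Matrix p p ℂ) (c : Matrix p p ℂ) :
    ∑ i, cliffordTerm (U i) (a i) c - 1 ⊗ₖ c =
      ∑ i, (ℑ (U i) : Matrix m m ℂ) ⊗ₖ a i +
        (((Fintype.card ι : ℂ) - 1) • 1 - ∑ i, (ℜ (U i) : Matrix m m ℂ)) ⊗ₖ c := by
  simp only [cliffordTerm, Finset.sum_add_distrib, ← sum_kronecker, Finset.sum_sub_distrib,
    Finset.sum_const, Finset.card_univ, sub_kronecker, smul_kronecker, sub_smul, one_smul,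
    Nat.cast_smul_eq_nsmul]
  abel

variable [Fintype m] [Fintype p] [DecidableEq p]

lemma cliffordTerm_mul_self {u : Matrix m m ℂ} (hu : u ∈ unitary (Matrix m m ℂ))
    {a c : Matrix p p ℂ} (ha : a * a = 1) (hc : c * c = 1) (hca : c * a = -(a * c)) :
    cliffordTerm u a c * cliffordTerm u a c =
      cliffordTerm u a c * (1 ⊗ₖ c) + (1 ⊗ₖ c) * cliffordTerm u a c := by
  simp only [cliffordTerm]
  set I : Matrix m m ℂ := ↑(ℑ u)
  set S : Matrix m m ℂ := 1 - ℜ u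
  have hIS : ⁅I, S⁆ = 0 := by
    have := isStarNormal_of_mem_unitary hu
    simp only [I, S, Ring.lie_def, mul_sub, sub_mul, mul_one, one_mul,
      (Commute.realPart_imaginaryPart u).eq, sub_self]
  have hI1 : ⁅I, (1 : Matrix m m ℂ)⁆ = 0 := by rw [Ring.lie_def, mul_one, one_mul, sub_self]
  calc (I ⊗ₖ a + S ⊗ₖ c) * (I ⊗ₖ a + S ⊗ₖ c)
        = I ⊗ₖ a * I ⊗ₖ a + S ⊗ₖ c * S ⊗ₖ c + (I ⊗ₖ a * S ⊗ₖ c + S ⊗ₖ c * I ⊗ₖ a) := by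
          noncomm_ring
    _ = (S + S) ⊗ₖ 1 := by
          rw [← mul_kronecker_mul, ← mul_kronecker_mul, ha, hc,
            kronecker_mul_add_mul_of_anticomm _ _ hca, hIS, zero_kronecker, add_zero,
            ← add_kronecker, imaginaryPart_mul_self_add_one_sub_realPart_mul_self hu]
    _ = (I ⊗ₖ a * 1 ⊗ₖ c + 1 ⊗ₖ c * I ⊗ₖ a) + (S ⊗ₖ c * 1 ⊗ₖ c + 1 ⊗ₖ c * S ⊗ₖ c) := by
          rw [kronecker_mul_add_mul_of_anticomm _ _ hca, hI1, zero_kronecker, zero_add,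
            kronecker_mul_add_mul_of_mul_self _ _ hc, mul_one, one_mul]
    _ = (I ⊗ₖ a + S ⊗ₖ c) * (1 ⊗ₖ c) + (1 ⊗ₖ c) * (I ⊗ₖ a + S ⊗ₖ c) := by
          noncomm_ring

lemma cliffordTerm_mul_add_mul (u w : Matrix m m ℂ) {a b c : Matrix p p ℂ}
    (hcc : c * c = 1) (hba : b * a = -(a * b)) (hca : c * a = -(a * c))
    (hbc : b * c = -(c * b)) :
    cliffordTerm u a c * cliffordTerm w b c + cliffordTerm w b c * cliffordTerm u a c =
      ⁅(ℑ u : Matrix m m ℂ), (ℑ w : Matrix m m ℂ)⁆ ⊗ₖ (a * b) +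
        ⁅(ℑ u : Matrix m m ℂ), 1 - (ℜ w : Matrix m m ℂ)⁆ ⊗ₖ (a * c) +
        ⁅1 - (ℜ u : Matrix m m ℂ), (ℑ w : Matrix m m ℂ)⁆ ⊗ₖ (c * b) +
        ((1 - (ℜ u : Matrix m m ℂ)) * (1 - (ℜ w : Matrix m m ℂ)) +
          (1 - (ℜ w : Matrix m m ℂ)) * (1 - (ℜ u : Matrix m m ℂ))) ⊗ₖ 1 := by
  rw [← kronecker_mul_add_mul_of_anticomm _ _ hba, ← kronecker_mul_add_mul_of_anticomm _ _ hca,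
    ← kronecker_mul_add_mul_of_anticomm _ _ hbc, ← kronecker_mul_add_mul_of_mul_self _ _ hcc,
    cliffordTerm, cliffordTerm]
  noncomm_ring

lemma neg_algebraMap_le_cliffordTerm_mul_add_mul {u w : Matrix m m ℂ}
    (hu : u ∈ unitary (Matrix m m ℂ)) (hw : w ∈ unitary (Matrix m m ℂ)) {a b c : Matrix p p ℂ}
    (ha : IsSelfAdjoint a) (hb : IsSelfAdjoint b) (hc : IsSelfAdjoint c) (haa : a * a = 1)
    (hbb : b * b = 1) (hcc : c * c = 1) (hba : b * a = -(a * b)) (hca : c * a = -(a * c))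
    (hcb : c * b = -(b * c)) :
    -algebraMap ℝ _ (5 * ‖⁅u, w⁆‖) ≤
      cliffordTerm u a c * cliffordTerm w b c + cliffordTerm w b c * cliffordTerm u a c := by
  have hbc : b * c = -(c * b) := by rw [hcb, neg_neg]
  have hSu : IsSelfAdjoint (1 - (ℜ u : Matrix m m ℂ)) := .sub (.one _) (ℜ u).2
  have hSw : IsSelfAdjoint (1 - (ℜ w : Matrix m m ℂ)) := .sub (.one _) (ℜ w).2
  have hIuIw := neg_algebraMap_le_lie_kronecker_mul (ℑ u).2 (ℑ w).2 ha hb haa hbb hba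
    (norm_lie_le_of_forall_norm_lie_le (norm_lie_imaginaryPart_le hu)
      (norm_lie_imaginaryPart_le hw))
  have hIuSw := neg_algebraMap_le_lie_kronecker_mul (ℑ u).2 hSw ha hc haa hcc hca
    (norm_lie_le_of_forall_norm_lie_le (norm_lie_imaginaryPart_le hu)
      (norm_lie_one_sub_realPart_le hw))
  have hSuIw := neg_algebraMap_le_lie_kronecker_mul hSu (ℑ w).2 hc hb hcc hbb hbc
    (norm_lie_le_of_forall_norm_lie_le (norm_lie_one_sub_realPart_le hu)
      (norm_lie_imaginaryPart_le hw))
  have hSuSw := kronecker_mono_left (neg_algebraMap_le_anticomm_one_sub_realPart hu hw)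
    (zero_le_one (α := Matrix p p ℂ))
  rw [neg_kronecker, ← map_one (algebraMap ℝ (Matrix p p ℂ)), algebraMap_kronecker_algebraMap,
    mul_one] at hSuSw
  have hsplit : -algebraMap ℝ (Matrix (m × p) (m × p) ℂ) (5 * ‖⁅u, w⁆‖) =
      -algebraMap ℝ _ ‖⁅u, w⁆‖ + -algebraMap ℝ _ ‖⁅u, w⁆‖ + -algebraMap ℝ _ ‖⁅u, w⁆‖ +
        -algebraMap ℝ _ (2 * ‖⁅u, w⁆‖) := by
    simp only [← neg_add, ← map_add]
    ring_nf
  rw [cliffordTerm_mul_add_mul u w hcc hba hca hbc, hsplit]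
  exact add_le_add (add_le_add (add_le_add hIuIw hIuSw) hSuIw) hSuSw

theorem algebraMap_le_sum_cliffordTerm_sub_mul_self {ι : Type*} [Fintype ι] [LinearOrder ι]
    {U : ι → Matrix m m ℂ} (hU : ∀ i, U i ∈ unitary (Matrix m m ℂ)) {a : ι → Matrix p p ℂ}
    {c : Matrix p p ℂ} (ha : ∀ i, IsSelfAdjoint (a i)) (hc : IsSelfAdjoint c)
    (haa : ∀ i, a i * a i = 1) (hcc : c * c = 1) (hanti : ∀ i j, i ≠ j → a j * a i = -(a i * a j))
    (hca : ∀ i, c * a i = -(a i * c)) :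
    algebraMap ℝ _ (1 - 5 * ∑ q ∈ Finset.univ.filter (fun q : ι × ι => q.1 < q.2),
        ‖⁅U q.1, U q.2⁆‖) ≤
      (∑ i, cliffordTerm (U i) (a i) c - 1 ⊗ₖ c) * (∑ i, cliffordTerm (U i) (a i) c - 1 ⊗ₖ c) := by
  have hee : ((1 : Matrix m m ℂ) ⊗ₖ c) * (1 ⊗ₖ c) = 1 := by
    rw [← mul_kronecker_mul, one_mul, hcc, one_kronecker_one]
  rw [sum_sub_mul_self_eq_one_add_sum_lt _ hee fun i =>
      cliffordTerm_mul_self (hU i) (haa i) hcc (hca i), map_sub, map_one, sub_eq_add_neg, Finset.mul_sum, map_sum, ← Finset.sum_neg_distrib]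
  gcongr with q hq
  have hne : q.1 ≠ q.2 := (Finset.mem_filter.1 hq).2.ne
  exact neg_algebraMap_le_cliffordTerm_mul_add_mul (hU q.1) (hU q.2) (ha q.1) (ha q.2) hc (haa q.1)
    (haa q.2) hcc (hanti _ _ hne) (hca q.1) (hca q.2)

end CliffordTerm

theorem stmt0_general {n d' : ℕ} (d : ℕ)
    (U : Fin d → Matrix (Fin n) (Fin n) ℂ)
    (hU : ∀ j, U j * (U j)ᴴ = 1 ∧ (U j)ᴴ * U j = 1)
    (γ : Fin (d+1) → Matrix (Fin d') (Fin d') ℂ)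
    (hγherm : ∀ k, (γ k).IsHermitian)
    (hγcliff : ∀ k l, γ k * γ l + γ l * γ k = (if k = l then (2:ℂ) else 0) • 1)
    (G : Matrix (Fin n × Fin d') (Fin n × Fin d') ℂ)
    (hG : G = (∑ j : Fin d, mIm (U j) ⊗ₖ γ j.castSucc) +
      ((((d : ℂ) - 1) • (1 : Matrix (Fin n) (Fin n) ℂ) - ∑ j : Fin d, mRe (U j)) ⊗ₖ
        γ (Fin.last d))) :
    (G * G - ((1 - 7 * ∑ p ∈ Finset.univ.filter (fun p : Fin d × Fin d => p.1 < p.2),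
        ‖U p.1 * U p.2 - U p.2 * U p.1‖ : ℝ) : ℂ) • 1).PosSemidef ∧
    (∀ δ : ℝ, (∀ i j, i ≠ j → ‖U i * U j - U j * U i‖ ≤ δ) →
      0 < 1 - 7 * δ * d * (d - 1) / 2 → IsUnit G) := by
  set C := ∑ p ∈ Finset.univ.filter (fun p : Fin d × Fin d => p.1 < p.2),
    ‖U p.1 * U p.2 - U p.2 * U p.1‖
  have hγsq : ∀ k, γ k * γ k = 1 := fun k => by
    simpa [← two_smul ℂ] using hγcliff k k
  have hγanti : ∀ k l, k ≠ l → γ l * γ k = -(γ k * γ l) := fun k l hkl =>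
    eq_neg_of_add_eq_zero_right (by simpa [hkl] using hγcliff k l)
  have hG' :
      G = ∑ j, cliffordTerm (U j) (γ j.castSucc) (γ (Fin.last d)) - 1 ⊗ₖ γ (Fin.last d) := by
    simp only [hG, sum_cliffordTerm_sub_one_kronecker, mRe_eq_realPart, mIm_eq_imaginaryPart,
      Fintype.card_fin]
  have hGG : algebraMap ℝ _ (1 - 7 * C) ≤ G * G := by
    refine (algebraMap_mono _ ?_).trans (hG' ▸ algebraMap_le_sum_cliffordTerm_sub_mul_self
      (fun j => Unitary.mem_iff.2 ⟨(hU j).2, (hU j).1⟩) (fun _ => hγherm _) (hγherm _)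
      (fun _ => hγsq _) (hγsq _) (fun i j hij => hγanti _ _ (Fin.castSucc_injective _ |>.ne hij))
      (fun i => hγanti _ _ (Fin.castSucc_lt_last i).ne))
    have : 0 ≤ C := Finset.sum_nonneg fun _ _ => norm_nonneg _
    simp only [C, Ring.lie_def] at this ⊢
    linarith
  refine ⟨?_, fun δ hδ hpos => Matrix.isUnit_of_algebraMap_le_mul_self ?_ hGG⟩
  · rwa [le_iff, Algebra.algebraMap_eq_smul_one, RCLike.real_smul_eq_coe_smul (K := ℂ)] at hGG
  · linarith [Fin.sum_filter_lt_le (fun i j => ‖U i * U j - U j * U i‖) hδ]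

/-- for unitaries `U_1, …, U_d` and a selfadjoint Clifford family
`γ_1, …, γ_{d+1}`, the matrix `G = ∑ Im(U_j) ⊗ γ_j + ((d-1)·1 - ∑ Re(U_j)) ⊗ γ_{d+1}`
satisfies `G² ≥ (1 - 7 ∑_{j<i} ‖[U_j, U_i]‖)·1`; in particular `G` is invertible if
`‖[U_j, U_i]‖ ≤ δ` for all `i ≠ j` and `1 - 7δ d(d-1)/2 > 0`. -/
theorem stmt0 {n d' : ℕ} (d : ℕ) (hd : 1 ≤ d)
    (U : Fin d → Matrix (Fin n) (Fin n) ℂ)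
    (hU : ∀ j, U j * (U j)ᴴ = 1 ∧ (U j)ᴴ * U j = 1)
    (γ : Fin (d+1) → Matrix (Fin d') (Fin d') ℂ)
    (hγherm : ∀ k, (γ k).IsHermitian)
    (hγcliff : ∀ k l, γ k * γ l + γ l * γ k = (if k = l then (2:ℂ) else 0) • 1)
    (G : Matrix (Fin n × Fin d') (Fin n × Fin d') ℂ)
    (hG : G = (∑ j : Fin d, mIm (U j) ⊗ₖ γ j.castSucc) +
      ((((d : ℂ) - 1) • (1 : Matrix (Fin n) (Fin n) ℂ) - ∑ j : Fin d, mRe (U j)) ⊗ₖ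
        γ (Fin.last d))) :
    (G * G - ((1 - 7 * ∑ p ∈ Finset.univ.filter (fun p : Fin d × Fin d => p.1 < p.2),
        ‖U p.1 * U p.2 - U p.2 * U p.1‖ : ℝ) : ℂ) • 1).PosSemidef ∧
    (∀ δ : ℝ, (∀ i j, i ≠ j → ‖U i * U j - U j * U i‖ ≤ δ) →
      0 < 1 - 7 * δ * d * (d - 1) / 2 → IsUnit G) :=
  stmt0_general d U hU γ hγherm hγcliff G hG
end
end

section
/- Let d ≥ 1 and let U_1, …, U_d ∈ M_n(ℂ) be pairwise commuting unitary matrices, and let γ_1, …, γ_{d+1} ∈ M_{d'}(ℂ) be a selfadjoint Clifford family. Then the Hermitian matrix G = ∑_{j=1}^d Im(U_j) ⊗ γ_j + ((d−1)·1 − ∑_{j=1}^d Re(U_j)) ⊗ γ_{d+1} is invertible and Sig(G) = 0. -/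
open Matrix
open scoped Kronecker Matrix.Norms.L2Operator ComplexOrder

noncomputable section

/-- The signature of a Hermitian matrix: number of positive eigenvalues minus the
number of negative eigenvalues, counted with multiplicity (junk value `0` if the
matrix is not Hermitian). -/
def matSig {m : Type*} [Fintype m] [DecidableEq m] (B : Matrix m m ℂ) : ℤ :=
  if hB : B.IsHermitian then
    ((Finset.univ.filter fun i => 0 < hB.eigenvalues i).card : ℤ) -
    ((Finset.univ.filter fun i => hB.eigenvalues i < 0).card : ℤ)
  else 0

/-!
Write `G = ∑ₖ Aₖ ⊗ γₖ`, where `A₁, …, A_{d+1}` are the Hermitian matrices `Im Uⱼ` and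
`(d - 1) - ∑ⱼ Re Uⱼ`. They lie in the commutative *-algebra generated by the `Uⱼ`, so the
Clifford relations give `G² = Q ⊗ 1` with `Q = ∑ₖ Aₖ²`, and `G^(2p+1) = ∑ₖ (Qᵖ Aₖ) ⊗ γₖ`.
Each `γₖ` is traceless, so every odd power of `G` is traceless, and a real spectrum whose odd
moments all vanish has as many positive as negative eigenvalues.

`G` is invertible once `Q` is. A vector `w` with `Q w = 0` is killed by every `Aₖ`, that is
`Uⱼ w = Uⱼ* w` and `∑ⱼ Uⱼ w = (d - 1) w`. The `Uⱼ` then behave as commuting involutions, and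
splitting `w` along their `±1`-eigenspaces one at a time yields signs `εⱼ = ±1` with
`d - 1 = ∑ⱼ εⱼ ≡ d (mod 2)`, which is absurd.
-/
theorem Matrix.sum_kronecker_s2 {ι R l m n p : Type*} [CommSemiring R] [Fintype ι]
    (A : ι → Matrix l m R) (B : Matrix n p R) : (∑ i, A i) ⊗ₖ B = ∑ i, A i ⊗ₖ B := by
  ext
  simp only [kroneckerMap_apply, sum_apply, Finset.sum_mul]

theorem Matrix.IsHermitian.kronecker {R m n : Type*} [CommRing R] [StarRing R]
    {A : Matrix m m R} {B : Matrix n n R} (hA : A.IsHermitian) (hB : B.IsHermitian) :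
    (A ⊗ₖ B).IsHermitian := by
  rw [IsHermitian, conjTranspose_kronecker, hA.eq, hB.eq]

section Clifford

variable {ι K m n : Type*} [DecidableEq ι] [Fintype m] [DecidableEq m] [Fintype n]

def IsCliffordFamily [CommRing K] (γ : ι → Matrix m m K) : Prop :=
  ∀ k l, γ k * γ l + γ l * γ k = (if k = l then (2 : K) else 0) • 1

namespace IsCliffordFamily

variable [Field K] [NeZero (2 : K)] {γ : ι → Matrix m m K}

theorem mul_self (hγ : IsCliffordFamily γ) (k : ι) : γ k * γ k = 1 := by
  have h := hγ k k
  rw [if_pos rfl, ← two_smul K] at h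
  exact smul_right_injective _ two_ne_zero h

theorem trace_eq_zero [Nontrivial ι] (hγ : IsCliffordFamily γ) (k : ι) : (γ k).trace = 0 := by
  obtain ⟨l, hlk⟩ := exists_ne k
  have hanti : γ l * γ k = -(γ k * γ l) := by
    rw [eq_neg_iff_add_eq_zero, hγ l k, if_neg hlk, zero_smul]
  have h : (γ k).trace = -(γ k).trace := calc
    (γ k).trace = (γ l * (γ k * γ l)).trace := by
      rw [← trace_mul_comm, mul_assoc, hγ.mul_self, mul_one]
    _ = -(γ k).trace := by
      rw [← mul_assoc, hanti, neg_mul, mul_assoc, hγ.mul_self, mul_one, trace_neg]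
  have h2 : (2 : K) * (γ k).trace = 0 := by linear_combination h
  exact (mul_eq_zero.mp h2).resolve_left two_ne_zero

variable [Fintype ι] {A : ι → Matrix n n K}

theorem sum_kronecker_mul_self (hγ : IsCliffordFamily γ) (hA : ∀ k l, Commute (A k) (A l)) :
    (∑ k, A k ⊗ₖ γ k) * (∑ k, A k ⊗ₖ γ k) = (∑ k, A k * A k) ⊗ₖ 1 := by
  have hXX : (∑ k, A k ⊗ₖ γ k) * (∑ k, A k ⊗ₖ γ k) =
      ∑ k, ∑ l, (A k * A l) ⊗ₖ (γ k * γ l) := by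
    simp_rw [Finset.sum_mul_sum, mul_kronecker_mul]
  have hXX' : (∑ k, A k ⊗ₖ γ k) * (∑ k, A k ⊗ₖ γ k) =
      ∑ k, ∑ l, (A k * A l) ⊗ₖ (γ l * γ k) := by
    rw [hXX, Finset.sum_comm]
    simp_rw [(hA _ _).eq]
  -- symmetrizing in `(k, l)` turns `γ k * γ l` into the anticommutator
  apply smul_right_injective _ (two_ne_zero : (2 : K) ≠ 0)
  calc (2 : K) • ((∑ k, A k ⊗ₖ γ k) * (∑ k, A k ⊗ₖ γ k))
      = ∑ k, ∑ l, (A k * A l) ⊗ₖ (γ k * γ l + γ l * γ k) := by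
        rw [two_smul]
        nth_rw 1 [hXX]
        simp_rw [hXX', ← Finset.sum_add_distrib, kronecker_add]
    _ = (2 : K) • ((∑ k, A k * A k) ⊗ₖ 1) := by
        simp [hγ _ _, ite_smul, apply_ite (kroneckerMap _ _), kronecker_smul, Finset.smul_sum,
          sum_kronecker_s2]

theorem isUnit_sum_kronecker [DecidableEq n] (hγ : IsCliffordFamily γ)
    (hA : ∀ k l, Commute (A k) (A l)) (hQ : IsUnit (∑ k, A k * A k)) :
    IsUnit (∑ k, A k ⊗ₖ γ k) := by
  rw [isUnit_iff_isUnit_det] at hQ ⊢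
  have h := congrArg det (hγ.sum_kronecker_mul_self hA)
  rw [det_mul, det_kronecker, det_one, one_pow, mul_one] at h
  exact isUnit_of_mul_isUnit_left (h ▸ hQ.pow _)

theorem sum_kronecker_pow_odd [DecidableEq n] (hγ : IsCliffordFamily γ)
    (hA : ∀ k l, Commute (A k) (A l)) (p : ℕ) :
    (∑ k, A k ⊗ₖ γ k) ^ (2 * p + 1) = ∑ k, ((∑ l, A l * A l) ^ p * A k) ⊗ₖ γ k := by
  induction p with
  | zero => simp
  | succ p ih =>
    rw [show 2 * (p + 1) + 1 = 2 + (2 * p + 1) by ring, pow_add, ih, sq,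
      hγ.sum_kronecker_mul_self hA, Finset.mul_sum]
    simp_rw [← mul_kronecker_mul, one_mul, ← mul_assoc, ← pow_succ']

theorem trace_sum_kronecker_pow_odd [DecidableEq n] [Nontrivial ι] (hγ : IsCliffordFamily γ)
    (hA : ∀ k l, Commute (A k) (A l)) (p : ℕ) :
    ((∑ k, A k ⊗ₖ γ k) ^ (2 * p + 1)).trace = 0 := by
  simp [hγ.sum_kronecker_pow_odd hA, trace_sum, trace_kronecker, hγ.trace_eq_zero]

end IsCliffordFamily

end Clifford

theorem Matrix.IsHermitian.trace_pow_eq_sum_eigenvalues_pow {𝕜 n : Type*} [RCLike 𝕜] [Fintype n]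
    [DecidableEq n] {A : Matrix n n 𝕜} (hA : A.IsHermitian) (m : ℕ) :
    (A ^ m).trace = ∑ i, (hA.eigenvalues i : 𝕜) ^ m := by
  rw [← cfc_pow_id (R := ℝ) A m hA.isSelfAdjoint, hA.cfc_eq, IsHermitian.cfc,
    Unitary.conjStarAlgAut_apply, trace_mul_cycle, Unitary.coe_star_mul_self, one_mul,
    trace_diagonal]
  simp

open Polynomial Finset in
theorem card_pos_eq_card_neg_of_sum_pow_odd_eq_zero {ι : Type*} [Fintype ι] (f : ι → ℝ)
    (h : ∀ k : ℕ, ∑ i, f i ^ (2 * k + 1) = 0) :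
    #{i | 0 < f i} = #{i | f i < 0} := by
  classical
  -- once `p` interpolates `q ↦ 1 / √q` at the values `f i ^ 2`, `f i * p (f i ^ 2)` is the sign
  -- of `f i`, and it is a combination of odd powers of `f i`
  obtain ⟨p, hp⟩ : ∃ p : ℝ[X], ∀ i, p.eval (f i ^ 2) = (√(f i ^ 2))⁻¹ :=
    ⟨Lagrange.interpolate (univ.image fun i => f i ^ 2) id fun q => (√q)⁻¹, fun i =>
      Lagrange.eval_interpolate_at_node (v := id) _ (Set.injOn_id _)
        (mem_image_of_mem _ (mem_univ i))⟩
  have hsign : ∀ i, f i * p.eval (f i ^ 2) =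
      (if 0 < f i then 1 else 0) - (if f i < 0 then 1 else 0) := by
    intro i
    rw [hp, Real.sqrt_sq_eq_abs]
    rcases lt_trichotomy (f i) 0 with hi | hi | hi
    · simp [hi, hi.not_gt, abs_of_neg hi, hi.ne]
    · simp [hi]
    · simp [hi, hi.not_gt, abs_of_pos hi, hi.ne']
  have hzero : ∑ i, f i * p.eval (f i ^ 2) = 0 := by
    simp_rw [eval_eq_sum_range, Finset.mul_sum]
    rw [Finset.sum_comm]
    refine Finset.sum_eq_zero fun k _ => ?_
    simp_rw [← pow_mul, mul_left_comm (f _), ← pow_succ', ← Finset.mul_sum, h, mul_zero]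
  simp_rw [hsign, Finset.sum_sub_distrib, ← Finset.sum_filter, Finset.sum_const, nsmul_one]
    at hzero
  exact_mod_cast sub_eq_zero.mp hzero

theorem matSig_eq_zero_of_trace_pow_odd_eq_zero {m : Type*} [Fintype m] [DecidableEq m]
    {B : Matrix m m ℂ} (hB : B.IsHermitian) (h : ∀ k : ℕ, (B ^ (2 * k + 1)).trace = 0) :
    matSig B = 0 := by
  rw [matSig, dif_pos hB, sub_eq_zero, Nat.cast_inj]
  refine card_pos_eq_card_neg_of_sum_pow_odd_eq_zero _ fun k => ?_
  refine (RCLike.ofReal_eq_zero (K := ℂ)).mp ?_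
  push_cast
  exact (hB.trace_pow_eq_sum_eigenvalues_pow _).symm.trans (h k)

theorem Module.End.exists_sign_sum_eq_of_sum_apply_eq_smul {K V : Type*} [Field K]
    [NeZero (2 : K)] [AddCommGroup V] [Module K V] {d : ℕ} (T : Fin d → Module.End K V)
    (hT : ∀ i j, Commute (T i) (T j)) {v : V} (hv : v ≠ 0) (hinv : ∀ j, T j (T j v) = v)
    {c : K} (hc : (∑ j, T j) v = c • v) :
    ∃ ε : Fin d → ℤ, (∀ j, ε j = 1 ∨ ε j = -1) ∧ c = ∑ j, (ε j : K) := by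
  induction d generalizing v c with
  | zero =>
    refine ⟨Fin.elim0, fun j => j.elim0, ?_⟩
    simpa [eq_comm, hv] using hc
  | succ d ih =>
    set u := T (Fin.last d)
    -- `v` has a nonzero component `v ± u v` in one of the `±1`-eigenspaces of the involution `u`
    obtain ⟨η, hη, hw⟩ : ∃ η : ℤ, (η = 1 ∨ η = -1) ∧ v + (η : K) • u v ≠ 0 := by
      by_contra! h
      have h2 : (2 : K) • v = 0 := by
        rw [two_smul]
        linear_combination (norm := module) h 1 (Or.inl rfl) + h (-1) (Or.inr rfl)
      exact hv ((smul_eq_zero.mp h2).resolve_left two_ne_zero)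
    set w := v + (η : K) • u v
    have hηη : (η : K) * η = 1 := by rcases hη with rfl | rfl <;> norm_num
    have huw : u w = (η : K) • w := by
      have huu : u (u v) = v := hinv _
      rw [map_add, map_smul, huu, smul_add, smul_smul, hηη, one_smul, add_comm]
    have hPw : ∀ P, Commute P u → P w = P v + (η : K) • u (P v) := fun P hP => by
      simp only [w, map_add, map_smul, ← Module.End.mul_apply, hP.eq]
    have hsum : (∑ j : Fin d, T j.castSucc) w = (c - η) • w := by
      have hS : (∑ j, T j) w = c • w := by
        rw [hPw _ (Commute.sum_left _ _ _ fun j _ => hT j _), hc]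
        simp only [w, map_smul, smul_add, smul_comm c]
      rw [Fin.sum_univ_castSucc, LinearMap.add_apply, huw] at hS
      rw [sub_smul, ← hS, add_sub_cancel_right]
    obtain ⟨ε, hε, hcε⟩ := ih (fun j => T j.castSucc) (fun i j => hT _ _) hw
      (fun j => by rw [← Module.End.mul_apply, hPw _ ((hT _ _).mul_left (hT _ _)),
        Module.End.mul_apply, hinv]) hsum
    exact ⟨Fin.snoc ε η, Fin.lastCases (by simpa using hη) (by simpa using hε),
      by simp [Fin.sum_univ_castSucc, ← hcε]⟩

theorem even_sum_add_card_of_forall_eq_one_or_neg_one {ι : Type*} [Fintype ι] {ε : ι → ℤ}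
    (hε : ∀ i, ε i = 1 ∨ ε i = -1) : Even (∑ i, ε i + Fintype.card ι) := by
  rw [Fintype.card_eq_sum_ones, Nat.cast_sum, ← Finset.sum_add_distrib]
  exact Finset.even_sum _ fun i _ => by rcases hε i with h | h <;> simp [h]

theorem mRe_isHermitian {n : ℕ} (A : Matrix (Fin n) (Fin n) ℂ) : (mRe A).IsHermitian := by
  rw [IsHermitian, mRe, conjTranspose_smul, conjTranspose_add, conjTranspose_conjTranspose,
    add_comm]
  norm_num

theorem mIm_isHermitian {n : ℕ} (A : Matrix (Fin n) (Fin n) ℂ) : (mIm A).IsHermitian := by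
  rw [IsHermitian, mIm, conjTranspose_smul, conjTranspose_sub, conjTranspose_conjTranspose,
    ← neg_sub, smul_neg, ← neg_smul]
  congr 1
  simp

theorem mIm_mulVec_eq_zero_iff {n : ℕ} {A : Matrix (Fin n) (Fin n) ℂ} {w : Fin n → ℂ} :
    mIm A *ᵥ w = 0 ↔ A *ᵥ w = Aᴴ *ᵥ w := by
  rw [mIm, smul_mulVec, smul_eq_zero, sub_mulVec, sub_eq_zero]
  simp [Complex.I_ne_zero]

theorem mRe_mulVec_of_mulVec_eq {n : ℕ} {A : Matrix (Fin n) (Fin n) ℂ} {w : Fin n → ℂ}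
    (h : A *ᵥ w = Aᴴ *ᵥ w) : mRe A *ᵥ w = A *ᵥ w := by
  rw [mRe, smul_mulVec, add_mulVec, ← h, ← two_smul ℂ, smul_smul]
  norm_num

theorem Matrix.mulVec_eq_zero_of_sum_conjTranspose_mul_self_mulVec_eq_zero {ι m R : Type*}
    [Fintype ι] [Fintype m] [CommRing R] [PartialOrder R] [StarRing R] [StarOrderedRing R]
    [NoZeroDivisors R] {A : ι → Matrix m m R} {w : m → R}
    (h : (∑ k, (A k)ᴴ * A k) *ᵥ w = 0) (k : ι) : A k *ᵥ w = 0 := by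
  have hsum : ∑ k, star (A k *ᵥ w) ⬝ᵥ (A k *ᵥ w) = 0 := by
    simp_rw [star_mulVec, dotProduct_mulVec, vecMul_vecMul, ← dotProduct_mulVec,
      ← dotProduct_sum, ← sum_mulVec, h, dotProduct_zero]
  exact dotProduct_star_self_eq_zero.mp <|
    (Finset.sum_eq_zero_iff_of_nonneg fun k _ => dotProduct_star_self_nonneg _).mp hsum k
      (Finset.mem_univ k)

open scoped IsMulCommutative in
theorem StarAlgebra.commute_of_mem_adjoin_of_unitary {R A ι : Type*} [CommSemiring R]
    [StarRing R] [Semiring A] [StarRing A] [Algebra R A] [StarModule R A] {U : ι → A}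
    (hU : ∀ j, U j ∈ unitary A) (hcomm : ∀ i j, Commute (U i) (U j)) {x y : A}
    (hx : x ∈ adjoin R (Set.range U)) (hy : y ∈ adjoin R (Set.range U)) : Commute x y := by
  have hstar (i j : ι) : Commute (U i) (star (U j)) :=
    ((hcomm j i).units_inv_left (u := Unitary.toUnits ⟨U j, hU j⟩)).symm
  have := isMulCommutative_adjoin R (s := Set.range U)
    (by rintro _ ⟨i, rfl⟩ _ ⟨j, rfl⟩; exact hcomm i j)
    (by rintro _ ⟨i, rfl⟩ _ ⟨j, rfl⟩; exact hstar i j)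
  exact congrArg Subtype.val (mul_comm (⟨x, hx⟩ : adjoin R (Set.range U)) ⟨y, hy⟩)

section CommutingUnitaries

variable {n d : ℕ} (U : Fin d → Matrix (Fin n) (Fin n) ℂ)

def cliffordCoeffs : Fin (d + 1) → Matrix (Fin n) (Fin n) ℂ :=
  Fin.snoc (fun j => mIm (U j)) (((d : ℂ) - 1) • 1 - ∑ j, mRe (U j))

@[simp]
theorem cliffordCoeffs_castSucc (j : Fin d) : cliffordCoeffs U j.castSucc = mIm (U j) :=
  Fin.snoc_castSucc ..

@[simp]
theorem cliffordCoeffs_last :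
    cliffordCoeffs U (Fin.last d) = ((d : ℂ) - 1) • 1 - ∑ j, mRe (U j) :=
  Fin.snoc_last ..

theorem sum_cliffordCoeffs_kronecker {d' : ℕ} (γ : Fin (d + 1) → Matrix (Fin d') (Fin d') ℂ) :
    ∑ k, cliffordCoeffs U k ⊗ₖ γ k = (∑ j, mIm (U j) ⊗ₖ γ j.castSucc) +
      (((d : ℂ) - 1) • 1 - ∑ j, mRe (U j)) ⊗ₖ γ (Fin.last d) := by
  simp [Fin.sum_univ_castSucc]

theorem cliffordCoeffs_isHermitian (k : Fin (d + 1)) : (cliffordCoeffs U k).IsHermitian := by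
  induction k using Fin.lastCases with
  | last =>
    rw [cliffordCoeffs_last]
    refine (isHermitian_one.smul ?_).sub ?_
    · simp [IsSelfAdjoint]
    · exact isSelfAdjoint_sum _ fun j _ => mRe_isHermitian (U j)
  | cast j => simpa using mIm_isHermitian (U j)

theorem cliffordCoeffs_mem_adjoin (k : Fin (d + 1)) :
    cliffordCoeffs U k ∈ StarAlgebra.adjoin ℂ (Set.range U) := by
  have hU (j : Fin d) : U j ∈ StarAlgebra.adjoin ℂ (Set.range U) :=
    StarAlgebra.subset_adjoin ℂ _ (Set.mem_range_self j)
  induction k using Fin.lastCases with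
  | last =>
    rw [cliffordCoeffs_last]
    refine sub_mem (StarSubalgebra.smul_mem _ (one_mem _) _) (sum_mem fun j _ => ?_)
    exact StarSubalgebra.smul_mem _ (add_mem (hU j) (star_mem (hU j))) _
  | cast j =>
    rw [cliffordCoeffs_castSucc]
    exact StarSubalgebra.smul_mem _ (sub_mem (hU j) (star_mem (hU j))) _

variable {U}

theorem isUnit_sum_cliffordCoeffs_mul_self (hU : ∀ j, U j ∈ unitaryGroup (Fin n) ℂ)
    (hcomm : ∀ i j, Commute (U i) (U j)) :
    IsUnit (∑ k, cliffordCoeffs U k * cliffordCoeffs U k) := by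
  rw [isUnit_iff_isUnit_det, isUnit_iff_ne_zero]
  intro hdet
  obtain ⟨w, hw0, hw⟩ := exists_mulVec_eq_zero_iff.mpr hdet
  have hzero : ∀ k, cliffordCoeffs U k *ᵥ w = 0 :=
    mulVec_eq_zero_of_sum_conjTranspose_mul_self_mulVec_eq_zero <| by
      simpa only [(cliffordCoeffs_isHermitian U _).eq] using hw
  have hreal (j : Fin d) : U j *ᵥ w = (U j)ᴴ *ᵥ w :=
    mIm_mulVec_eq_zero_iff.mp (by simpa using hzero j.castSucc)
  have hsum : (∑ j, toLinAlgEquiv' (U j)) w = ((d : ℂ) - 1) • w := by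
    have h := hzero (Fin.last d)
    rw [cliffordCoeffs_last, sub_mulVec, sub_eq_zero, smul_mulVec, one_mulVec, sum_mulVec] at h
    rw [← map_sum, toLinAlgEquiv'_apply, sum_mulVec, h]
    exact Finset.sum_congr rfl fun j _ => (mRe_mulVec_of_mulVec_eq (hreal j)).symm
  obtain ⟨ε, hε, hc⟩ := Module.End.exists_sign_sum_eq_of_sum_apply_eq_smul
    (fun j => toLinAlgEquiv' (U j)) (fun i j => (hcomm i j).map _) hw0
    (fun j => by rw [toLinAlgEquiv'_apply, toLinAlgEquiv'_apply, hreal, mulVec_mulVec,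
      ← star_eq_conjTranspose, mem_unitaryGroup_iff.mp (hU j), one_mulVec]) hsum
  have hε' : ∑ j, ε j = d - 1 := by exact_mod_cast hc.symm
  obtain ⟨r, hr⟩ := even_sum_add_card_of_forall_eq_one_or_neg_one hε
  rw [hε', Fintype.card_fin] at hr
  omega

end CommutingUnitaries

/-- for pairwise commuting unitaries `U_1, …, U_d` and a selfadjoint Clifford
family `γ_1, …, γ_{d+1}`, the Hermitian matrix
`G = ∑ Im(U_j) ⊗ γ_j + ((d-1)·1 - ∑ Re(U_j)) ⊗ γ_{d+1}` is invertible and `Sig(G) = 0`. -/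
theorem stmt2 {n d' : ℕ} (d : ℕ) (hd : 1 ≤ d)
    (U : Fin d → Matrix (Fin n) (Fin n) ℂ)
    (hU : ∀ j, U j * (U j)ᴴ = 1 ∧ (U j)ᴴ * U j = 1)
    (hcomm : ∀ i j, U i * U j = U j * U i)
    (γ : Fin (d+1) → Matrix (Fin d') (Fin d') ℂ)
    (hγherm : ∀ k, (γ k).IsHermitian)
    (hγcliff : ∀ k l, γ k * γ l + γ l * γ k = (if k = l then (2:ℂ) else 0) • 1)
    (G : Matrix (Fin n × Fin d') (Fin n × Fin d') ℂ)
    (hG : G = (∑ j : Fin d, mIm (U j) ⊗ₖ γ j.castSucc) +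
      ((((d : ℂ) - 1) • (1 : Matrix (Fin n) (Fin n) ℂ) - ∑ j : Fin d, mRe (U j)) ⊗ₖ
        γ (Fin.last d))) :
    G.IsHermitian ∧ IsUnit G ∧ matSig G = 0 := by
  have hγ : IsCliffordFamily γ := hγcliff
  have hUu (j : Fin d) : U j ∈ unitaryGroup (Fin n) ℂ := mem_unitaryGroup_iff.mpr (hU j).1
  have hA (k l : Fin (d + 1)) : Commute (cliffordCoeffs U k) (cliffordCoeffs U l) :=
    StarAlgebra.commute_of_mem_adjoin_of_unitary hUu hcomm
      (cliffordCoeffs_mem_adjoin U k) (cliffordCoeffs_mem_adjoin U l)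
  have : Nontrivial (Fin (d + 1)) := Fin.nontrivial_iff_two_le.mpr (by omega)
  rw [hG, ← sum_cliffordCoeffs_kronecker]
  have hGherm : (∑ k, cliffordCoeffs U k ⊗ₖ γ k).IsHermitian :=
    isSelfAdjoint_sum _ fun k _ => (cliffordCoeffs_isHermitian U k).kronecker (hγherm k)
  exact ⟨hGherm, hγ.isUnit_sum_kronecker hA (isUnit_sum_cliffordCoeffs_mul_self hUu hcomm),
    matSig_eq_zero_of_trace_pow_odd_eq_zero hGherm (hγ.trace_sum_kronecker_pow_odd hA)⟩
end
end

section
/- Let A be a unital C*-algebra, let δ ≤ 1/2, and let a ∈ A be selfadjoint with ‖a² − 1‖ ≤ δ, so that the spectrum of a is contained in [−√(1+δ), −√(1−δ)] ∪ [√(1−δ), √(1+δ)]. Let P = f(a) be the spectral projection of a onto its positive spectrum, defined by continuous functional calculus with f equal to 1 on [√(1−δ), √(1+δ)] and equal to 0 on [−√(1+δ), −√(1−δ)]. Then for every b ∈ A one has ‖bP − Pb‖ ≤ 2·‖ba − ab‖. -/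
/-!
Since `0 ∉ σ(a)`, `P = (1 + u) / 2` for the sign `u = a |a|⁻¹`, so it suffices to show
`‖[b, u]‖ ≤ 4 ‖[b, a]‖`. Let `m = √(1 - δ)`, `M = √(1 + δ)`, so `σ(|a|) ⊆ [m, M]`, and put
`X = [b, |a|]`. Then `X |a| + |a| X = [b, a²] = [b, a] a + a [b, a]`, and since
`‖|a| - (m + M) / 2‖ ≤ (M - m) / 2` this anticommutator controls `X`: `m ‖X‖ ≤ M ‖[b, a]‖`.
Finally `[b, u] = ([b, a] - u X) |a|⁻¹` gives `m² ‖[b, u]‖ ≤ (m + M) ‖[b, a]‖`, and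
`m + M ≤ 2 ≤ 4 m²` because `δ ≤ 1/2`.
-/

section NormedRing

variable {A : Type*} [NormedRing A]

theorem commutator_mul_self (b x : A) :
    b * (x * x) - x * x * b = (b * x - x * b) * x + x * (b * x - x * b) := by
  noncomm_ring

theorem norm_commutator_mul_self_le (b x : A) :
    ‖b * (x * x) - x * x * b‖ ≤ 2 * ‖x‖ * ‖b * x - x * b‖ := by
  rw [commutator_mul_self]
  calc _ ≤ ‖b * x - x * b‖ * ‖x‖ + ‖x‖ * ‖b * x - x * b‖ :=
        (norm_add_le _ _).trans (add_le_add (norm_mul_le _ _) (norm_mul_le _ _))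
    _ = _ := by ring

theorem norm_commutator_mul_inv_le (a b : A) (r : Aˣ) :
    ‖b * (a * ↑r⁻¹) - a * ↑r⁻¹ * b‖ ≤
      (‖b * a - a * b‖ + ‖a * ↑r⁻¹‖ * ‖b * r - r * b‖) * ‖(↑r⁻¹ : A)‖ := by
  have h : b * (a * ↑r⁻¹) - a * ↑r⁻¹ * b =
      (b * a - a * b - a * ↑r⁻¹ * (b * r - r * b)) * ↑r⁻¹ := by
    simp only [mul_sub, sub_mul, mul_assoc, Units.mul_inv, Units.inv_mul_cancel_left, mul_one]
    abel
  rw [h]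
  refine (norm_mul_le _ _).trans (mul_le_mul_of_nonneg_right ?_ (norm_nonneg _))
  exact (norm_sub_le _ _).trans (add_le_add_right (norm_mul_le _ _) _)

variable [NormedAlgebra ℝ A]

theorem two_mul_sub_mul_norm_le_norm_anticommutator (r X : A) {t ρ : ℝ}
    (h : ‖r - algebraMap ℝ A t‖ ≤ ρ) :
    2 * (t - ρ) * ‖X‖ ≤ ‖X * r + r * X‖ := by
  set d := r - algebraMap ℝ A t
  have hid : (2 * t) • X = X * r + r * X - (X * d + d * X) := by
    simp only [d, Algebra.algebraMap_eq_smul_one, mul_sub, sub_mul, mul_smul_comm,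
      smul_mul_assoc, mul_one, one_mul]
    module
  have hd : ‖X * d + d * X‖ ≤ 2 * ρ * ‖X‖ := by
    calc _ ≤ ‖X‖ * ‖d‖ + ‖d‖ * ‖X‖ :=
          (norm_add_le _ _).trans (add_le_add (norm_mul_le _ _) (norm_mul_le _ _))
      _ ≤ ‖X‖ * ρ + ρ * ‖X‖ := by gcongr
      _ = 2 * ρ * ‖X‖ := by ring
  calc 2 * (t - ρ) * ‖X‖ ≤ ‖(2 * t) • X‖ - 2 * ρ * ‖X‖ := by
        rw [norm_smul, Real.norm_eq_abs]
        nlinarith [le_abs_self (2 * t), norm_nonneg X]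
    _ ≤ ‖X * r + r * X‖ := by
        rw [hid]
        linarith [norm_sub_le (X * r + r * X) (X * d + d * X)]

end NormedRing

theorem Real.abs_mem_Icc_sqrt_of_abs_mul_self_sub_one_le {x δ : ℝ} (h : |x * x - 1| ≤ δ) :
    |x| ∈ Set.Icc √(1 - δ) √(1 + δ) := by
  rw [abs_le, ← abs_mul_abs_self x] at h
  rw [← Real.sqrt_mul_self (abs_nonneg x)]
  exact ⟨Real.sqrt_le_sqrt (by linarith), Real.sqrt_le_sqrt (by linarith)⟩

theorem Real.sqrt_one_sub_add_sqrt_one_add_le_two {δ : ℝ} (h₁ : -1 ≤ δ) (h₂ : δ ≤ 1) :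
    √(1 - δ) + √(1 + δ) ≤ 2 := by
  have hp := Real.sq_sqrt (show 0 ≤ 1 - δ by linarith)
  have hq := Real.sq_sqrt (show 0 ≤ 1 + δ by linarith)
  nlinarith [sq_nonneg (√(1 - δ) - √(1 + δ)), Real.sqrt_nonneg (1 - δ), Real.sqrt_nonneg (1 + δ)]

section CStarAlgebra

variable {A : Type*} [CStarAlgebra A] {a : A}

theorem abs_mul_self_sub_one_le_norm (ha : IsSelfAdjoint a) {x : ℝ} (hx : x ∈ spectrum ℝ a) :
    |x * x - 1| ≤ ‖a * a - 1‖ := by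
  have h := norm_apply_le_norm_cfc (fun x : ℝ => x * x - 1) a hx
  rwa [cfc_sub (fun x : ℝ => x * x) (fun _ => 1) a, cfc_mul .., cfc_id' .., cfc_const_one ..,
    Real.norm_eq_abs] at h

theorem cfc_abs_mul_self (ha : IsSelfAdjoint a) :
    cfc (fun x : ℝ => |x|) a * cfc (fun x : ℝ => |x|) a = a * a := by
  rw [← cfc_mul .., cfc_congr fun x _ => abs_mul_abs_self x, cfc_mul .., cfc_id' ..]

theorem mul_cfc_abs_inv (ha : IsSelfAdjoint a) (h0 : (0 : ℝ) ∉ spectrum ℝ a) :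
    a * cfc (fun x : ℝ => |x|⁻¹) a = cfc (fun x : ℝ => x / |x|) a := by
  have hcont : ContinuousOn (fun x : ℝ => |x|⁻¹) (spectrum ℝ a) :=
    continuous_abs.continuousOn.inv₀ fun x hx => abs_ne_zero.2 (ne_of_mem_of_not_mem hx h0)
  have h := cfc_mul (fun x : ℝ => x) (fun x => |x|⁻¹) a continuousOn_id hcont
  rw [cfc_id' ℝ a] at h
  simp only [← h, div_eq_mul_inv]

theorem norm_cfc_div_abs_le_one : ‖cfc (fun x : ℝ => x / |x|) a‖ ≤ 1 :=
  norm_cfc_le zero_le_one fun x _ => by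
    rw [Real.norm_eq_abs, abs_div, abs_abs]
    exact div_self_le_one _

theorem norm_cfc_abs_inv_le {m : ℝ} (hm : 0 < m) (hspec : ∀ x ∈ spectrum ℝ a, m ≤ |x|) :
    ‖cfc (fun x : ℝ => |x|⁻¹) a‖ ≤ m⁻¹ :=
  norm_cfc_le (inv_nonneg.2 hm.le) fun x hx => by
    rw [Real.norm_eq_abs, abs_inv, abs_abs]
    exact inv_anti₀ hm (hspec x hx)

theorem norm_cfc_abs_sub_algebraMap_le (ha : IsSelfAdjoint a) {m M : ℝ} (hmM : m ≤ M)
    (hspec : ∀ x ∈ spectrum ℝ a, |x| ∈ Set.Icc m M) :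
    ‖cfc (fun x : ℝ => |x|) a - algebraMap ℝ A ((m + M) / 2)‖ ≤ (M - m) / 2 := by
  rw [← cfc_const ((m + M) / 2) a, ← cfc_sub (fun x : ℝ => |x|) (fun _ => (m + M) / 2) a]
  refine norm_cfc_le (by linarith) fun x hx => ?_
  obtain ⟨h₁, h₂⟩ := hspec x hx
  rw [Real.norm_eq_abs, abs_le]
  constructor <;> linarith

theorem IsSelfAdjoint.norm_le_of_forall_mem_spectrum_abs_le (ha : IsSelfAdjoint a) {M : ℝ}
    (hM : 0 ≤ M) (hspec : ∀ x ∈ spectrum ℝ a, |x| ≤ M) : ‖a‖ ≤ M := by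
  rw [← cfc_id' ℝ a]
  exact norm_cfc_le hM fun x hx => hspec x hx

theorem mul_norm_commutator_cfc_abs_le (ha : IsSelfAdjoint a) {m M : ℝ} (hm : 0 ≤ m)
    (hmM : m ≤ M) (hspec : ∀ x ∈ spectrum ℝ a, |x| ∈ Set.Icc m M) (b : A) :
    m * ‖b * cfc (fun x : ℝ => |x|) a - cfc (fun x : ℝ => |x|) a * b‖ ≤
      M * ‖b * a - a * b‖ := by
  set r := cfc (fun x : ℝ => |x|) a
  have hlower := two_mul_sub_mul_norm_le_norm_anticommutator r (b * r - r * b)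
    (norm_cfc_abs_sub_algebraMap_le ha hmM hspec)
  -- `X r + r X = [b, r²] = [b, a²]` for `X = [b, r]`
  rw [← commutator_mul_self, cfc_abs_mul_self ha] at hlower
  have ha_le : ‖a‖ ≤ M :=
    ha.norm_le_of_forall_mem_spectrum_abs_le (hm.trans hmM) fun x hx => (hspec x hx).2
  have hupper := norm_commutator_mul_self_le b a
  have hc := norm_nonneg (b * a - a * b)
  nlinarith

theorem sq_mul_norm_commutator_cfc_div_abs_le (ha : IsSelfAdjoint a) {m M : ℝ} (hm : 0 < m)
    (hmM : m ≤ M) (hspec : ∀ x ∈ spectrum ℝ a, |x| ∈ Set.Icc m M) (b : A) :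
    m ^ 2 * ‖b * cfc (fun x : ℝ => x / |x|) a - cfc (fun x : ℝ => x / |x|) a * b‖ ≤
      (m + M) * ‖b * a - a * b‖ := by
  have h0 : (0 : ℝ) ∉ spectrum ℝ a := fun h => by
    simpa [hm.not_ge] using (hspec 0 h).1
  let r : Aˣ :=
    cfcUnits (fun x : ℝ => |x|) a fun x hx => abs_ne_zero.2 (ne_of_mem_of_not_mem hx h0)
  have hr_inv : (↑r⁻¹ : A) = cfc (fun x : ℝ => |x|⁻¹) a := rfl
  have hr : (r : A) = cfc (fun x : ℝ => |x|) a := rfl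
  have hpolar := norm_commutator_mul_inv_le a b r
  rw [hr, hr_inv, mul_cfc_abs_inv ha h0] at hpolar
  have hX := mul_norm_commutator_cfc_abs_le ha hm.le hmM hspec b
  have hs := norm_cfc_abs_inv_le hm fun x hx => (hspec x hx).1
  set X := b * cfc (fun x : ℝ => |x|) a - cfc (fun x : ℝ => |x|) a * b
  calc _ ≤ m ^ 2 * ((‖b * a - a * b‖ + 1 * ‖X‖) * m⁻¹) := by
        gcongr
        refine hpolar.trans ?_
        gcongr
        exact norm_cfc_div_abs_le_one
    _ = m * ‖b * a - a * b‖ + m * ‖X‖ := by field_simp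
    _ ≤ (m + M) * ‖b * a - a * b‖ := by linarith

theorem cfc_eq_inv_two_smul_one_add_cfc_div_abs (ha : IsSelfAdjoint a)
    (h0 : (0 : ℝ) ∉ spectrum ℝ a) {f : ℝ → ℝ} (hpos : ∀ x ∈ spectrum ℝ a, 0 < x → f x = 1)
    (hneg : ∀ x ∈ spectrum ℝ a, x < 0 → f x = 0) :
    cfc f a = (2⁻¹ : ℝ) • (1 + cfc (fun x : ℝ => x / |x|) a) := by
  have hcont : ContinuousOn (fun x : ℝ => x / |x|) (spectrum ℝ a) :=
    continuousOn_id.div continuous_abs.continuousOn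
      fun x hx => abs_ne_zero.2 (ne_of_mem_of_not_mem hx h0)
  rw [cfc_congr (g := fun x => 2⁻¹ * (1 + x / |x|)), cfc_const_mul .., cfc_const_add ..,
    Algebra.algebraMap_eq_smul_one, one_smul]
  intro x hx
  dsimp only
  rcases lt_or_gt_of_ne (ne_of_mem_of_not_mem hx h0) with hx0 | hx0
  · rw [hneg x hx hx0, abs_of_neg hx0, div_neg, div_self hx0.ne]
    norm_num
  · rw [hpos x hx hx0, abs_of_pos hx0, div_self hx0.ne']
    norm_num

end CStarAlgebra

theorem stmt8_general {𝒜 : Type*} [CStarAlgebra 𝒜] (a : 𝒜) (ha : IsSelfAdjoint a)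
    (δ : ℝ) (hδ : δ ≤ 1/2) (hb : ‖a * a - 1‖ ≤ δ)
    (f : ℝ → ℝ)
    (hf1 : ∀ x ∈ Set.Icc (Real.sqrt (1 - δ)) (Real.sqrt (1 + δ)), f x = 1)
    (hf0 : ∀ x ∈ Set.Icc (-Real.sqrt (1 + δ)) (-Real.sqrt (1 - δ)), f x = 0) :
    ∀ b : 𝒜, ‖b * cfc f a - cfc f a * b‖ ≤ 2 * ‖b * a - a * b‖ := by
  intro b
  have hδ₀ : 0 ≤ δ := (norm_nonneg _).trans hb
  have hm : 0 < √(1 - δ) := Real.sqrt_pos.2 (by linarith)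
  have hspec : ∀ x ∈ spectrum ℝ a, |x| ∈ Set.Icc √(1 - δ) √(1 + δ) := fun x hx =>
    Real.abs_mem_Icc_sqrt_of_abs_mul_self_sub_one_le
      ((abs_mul_self_sub_one_le_norm ha hx).trans hb)
  have h0 : (0 : ℝ) ∉ spectrum ℝ a := fun h => by simpa [hm.not_ge] using (hspec 0 h).1
  have hP := cfc_eq_inv_two_smul_one_add_cfc_div_abs ha h0 (f := f)
    (fun x hx hx0 => hf1 x (abs_of_pos hx0 ▸ hspec x hx))
    (fun x hx hx0 => hf0 x (by
      obtain ⟨h₁, h₂⟩ := abs_of_neg hx0 ▸ hspec x hx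
      constructor <;> linarith))
  have hsign := sq_mul_norm_commutator_cfc_div_abs_le ha hm
    (Real.sqrt_le_sqrt (by linarith)) hspec b
  have hsum := Real.sqrt_one_sub_add_sqrt_one_add_le_two (by linarith) (by linarith : δ ≤ 1)
  rw [Real.sq_sqrt (by linarith)] at hsign
  have hcomm : b * cfc f a - cfc f a * b = (2⁻¹ : ℝ) •
      (b * cfc (fun x : ℝ => x / |x|) a - cfc (fun x : ℝ => x / |x|) a * b) := by
    rw [hP, mul_smul_comm, smul_mul_assoc, ← smul_sub, mul_add, add_mul, mul_one, one_mul,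
      add_sub_add_left_eq_sub]
  rw [hcomm, norm_smul, Real.norm_eq_abs, abs_of_pos (by norm_num)]
  nlinarith [norm_nonneg (b * a - a * b)]

/-- in a unital C*-algebra, let `a` be selfadjoint with `‖a² - 1‖ ≤ δ ≤ 1/2`,
and let `P = f(a)` be the spectral projection onto the positive spectrum, given by the
continuous functional calculus for any continuous `f : ℝ → ℝ` equal to `1` on
`[√(1-δ), √(1+δ)]` and to `0` on `[-√(1+δ), -√(1-δ)]`. Then `‖[b, P]‖ ≤ 2‖[b, a]‖` for
every `b`. -/
theorem stmt8 {𝒜 : Type*} [CStarAlgebra 𝒜] (a : 𝒜) (ha : IsSelfAdjoint a)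
    (δ : ℝ) (hδ : δ ≤ 1/2) (hb : ‖a * a - 1‖ ≤ δ)
    (f : ℝ → ℝ) (hf : Continuous f)
    (hf1 : ∀ x ∈ Set.Icc (Real.sqrt (1 - δ)) (Real.sqrt (1 + δ)), f x = 1)
    (hf0 : ∀ x ∈ Set.Icc (-Real.sqrt (1 + δ)) (-Real.sqrt (1 - δ)), f x = 0) :
    ∀ b : 𝒜, ‖b * cfc f a - cfc f a * b‖ ≤ 2 * ‖b * a - a * b‖ :=
  stmt8_general a ha δ hδ hb f hf1 hf0
end

section
/- Let A be a unital C*-algebra, let δ ∈ (0, 1/2], and let A_i, A_j ∈ A be invertible elements with ‖A_jA_j* − 1‖ ≤ δ, ‖A_j*A_j − 1‖ ≤ δ, and ‖A_jA_i − A_iA_j‖ ≤ δ. Then ‖A_j‖ ≤ 1 + δ/2, ‖A_j⁻¹‖² ≤ 1 + 2δ, and ‖A_iA_j* − A_j*A_i‖ ≤ 8δ. -/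
lemma aux_inv_norm {R : Type*} [NormedRing R] [CompleteSpace R] [NormOneClass R] {x y : R} {δ : ℝ}
    (hδ1 : δ < 1) (hx : ‖1 - x‖ ≤ δ) (h1 : x * y = 1) (_h2 : y * x = 1) :
    ‖y‖ ≤ (1 - δ)⁻¹ := by
  set t : R := 1 - x with ht
  have htn : ‖t‖ < 1 := lt_of_le_of_lt hx hδ1
  have hx' : x = 1 - t := by simp [ht]
  have hu' : (∑' n : ℕ, t ^ n) * (1 - t) = 1 := geom_series_mul_neg t htn
  have hy : y = ∑' n : ℕ, t ^ n := by
    calc y = 1 * y := (one_mul y).symm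
    _ = ((∑' n : ℕ, t ^ n) * (1 - t)) * y := by rw [hu']
    _ = (∑' n : ℕ, t ^ n) * ((1 - t) * y) := by rw [mul_assoc]
    _ = (∑' n : ℕ, t ^ n) * 1 := by rw [← hx', h1]
    _ = ∑' n : ℕ, t ^ n := mul_one _
  rw [hy]
  have hb := tsum_geometric_le_of_norm_lt_one t htn
  rw [norm_one] at hb
  calc ‖∑' n : ℕ, t ^ n‖ ≤ (1 - ‖t‖)⁻¹ := by linarith
  _ ≤ (1 - δ)⁻¹ := by
      apply inv_anti₀ <;> linarith [norm_nonneg t, hx]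

/-- in a unital C*-algebra, if `A_i, A_j` are invertible with
`‖A A* - 1‖ ≤ δ`, `‖A* A - 1‖ ≤ δ` (for `A ∈ {A_i, A_j}`) and `‖A_j A_i - A_i A_j‖ ≤ δ`
for `δ ∈ (0, 1/2]`, then `‖A_j‖ ≤ 1 + δ/2`, `‖A_j⁻¹‖² ≤ 1 + 2δ` and
`‖A_i A_j* - A_j* A_i‖ ≤ 8δ`. -/
theorem stmt14 {𝒜 : Type*} [CStarAlgebra 𝒜]
    (δ : ℝ) (hδ0 : 0 < δ) (hδ : δ ≤ 1/2)
    (Ai Aj Bj : 𝒜)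
    (hAi : IsUnit Ai)
    (hBj : Aj * Bj = 1 ∧ Bj * Aj = 1)
    (hj1 : ‖Aj * star Aj - 1‖ ≤ δ) (hj2 : ‖star Aj * Aj - 1‖ ≤ δ)
    (hi1 : ‖Ai * star Ai - 1‖ ≤ δ) (hi2 : ‖star Ai * Ai - 1‖ ≤ δ)
    (hc : ‖Aj * Ai - Ai * Aj‖ ≤ δ) :
    ‖Aj‖ ≤ 1 + δ/2 ∧ ‖Bj‖^2 ≤ 1 + 2*δ ∧ ‖Ai * star Aj - star Aj * Ai‖ ≤ 8 * δ := by
  obtain ⟨hb1, hb2⟩ := hBj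
  rcases subsingleton_or_nontrivial 𝒜 with hsub | hnt
  · have hz : ∀ x : 𝒜, ‖x‖ = 0 := fun x => by rw [Subsingleton.elim x 0, norm_zero]
    refine ⟨?_, ?_, ?_⟩ <;> rw [hz] <;> nlinarith
  -- norm bound on Aj
  have hAjsq : ‖Aj‖ * ‖Aj‖ ≤ 1 + δ := by
    rw [← CStarRing.norm_self_mul_star]
    calc ‖Aj * star Aj‖ = ‖(Aj * star Aj - 1) + 1‖ := by rw [sub_add_cancel]
    _ ≤ ‖Aj * star Aj - 1‖ + ‖(1 : 𝒜)‖ := norm_add_le _ _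
    _ ≤ 1 + δ := by rw [norm_one]; linarith
  have hAjn : ‖Aj‖ ≤ 1 + δ/2 := by
    nlinarith [norm_nonneg Aj]
  -- part 2
  have hsb1 : star Bj * star Aj = 1 := by rw [← star_mul, hb1, star_one]
  have hsb2 : star Aj * star Bj = 1 := by rw [← star_mul, hb2, star_one]
  have e1 : star Aj * Aj * (Bj * star Bj) = 1 := by
    rw [mul_assoc, ← mul_assoc Aj Bj, hb1, one_mul, hsb2]
  have e2 : Bj * star Bj * (star Aj * Aj) = 1 := by
    rw [mul_assoc, ← mul_assoc (star Bj), hsb1, one_mul, hb2]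
  have key : ‖Bj * star Bj‖ ≤ (1 - δ)⁻¹ := by
    apply aux_inv_norm (x := star Aj * Aj) (by linarith) _ e1 e2
    rwa [← norm_neg, neg_sub]
  have hBsq : ‖Bj‖ ^ 2 ≤ (1 - δ)⁻¹ := by
    rwa [sq, ← CStarRing.norm_self_mul_star]
  have hinv : (1 - δ)⁻¹ ≤ 1 + 2 * δ := by
    rw [inv_le_iff_one_le_mul₀ (by linarith)]
    nlinarith
  have hB2 : ‖Bj‖ ^ 2 ≤ 1 + 2 * δ := le_trans hBsq hinv
  refine ⟨hAjn, hB2, ?_⟩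
  -- part 3
  have hBn : ‖Bj‖ ≤ 3/2 := by nlinarith [norm_nonneg Bj, sq_nonneg ‖Bj‖, sq ‖Bj‖ ▸ hB2]
  have hAin : ‖Ai‖ ≤ 5/4 := by
    have h : ‖Ai‖ * ‖Ai‖ ≤ 1 + δ := by
      rw [← CStarRing.norm_self_mul_star]
      calc ‖Ai * star Ai‖ = ‖(Ai * star Ai - 1) + 1‖ := by rw [sub_add_cancel]
      _ ≤ ‖Ai * star Ai - 1‖ + ‖(1 : 𝒜)‖ := norm_add_le _ _
      _ ≤ 1 + δ := by rw [norm_one]; linarith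
    nlinarith [norm_nonneg Ai]
  have hdiff : ‖star Aj - Bj‖ ≤ (3/2) * δ := by
    have h : star Aj - Bj = Bj * (Aj * star Aj - 1) := by
      rw [mul_sub, ← mul_assoc, hb2, one_mul, mul_one]
    rw [h]
    calc ‖Bj * (Aj * star Aj - 1)‖ ≤ ‖Bj‖ * ‖Aj * star Aj - 1‖ := norm_mul_le _ _
    _ ≤ (3/2) * δ := mul_le_mul hBn hj1 (norm_nonneg _) (by norm_num)
  have hBB : ‖Bj‖ * ‖Bj‖ ≤ 1 + 2 * δ := by rw [← sq]; exact hB2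
  have hcomm : ‖Ai * Bj - Bj * Ai‖ ≤ (1 + 2*δ) * δ := by
    have heq : Ai * Bj - Bj * Ai = Bj * (Aj * Ai - Ai * Aj) * Bj := by
      have t1 : Bj * (Aj * Ai) * Bj = Ai * Bj := by
        rw [← mul_assoc, hb2, one_mul]
      have t2 : Bj * (Ai * Aj) * Bj = Bj * Ai := by
        rw [mul_assoc, mul_assoc, hb1, mul_one]
      rw [mul_sub, sub_mul, t1, t2]
    rw [heq]
    calc ‖Bj * (Aj * Ai - Ai * Aj) * Bj‖ ≤ ‖Bj * (Aj * Ai - Ai * Aj)‖ * ‖Bj‖ :=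
        norm_mul_le _ _
    _ ≤ ‖Bj‖ * ‖Aj * Ai - Ai * Aj‖ * ‖Bj‖ := by
        gcongr; exact norm_mul_le _ _
    _ = ‖Bj‖ * ‖Bj‖ * ‖Aj * Ai - Ai * Aj‖ := by ring
    _ ≤ (1 + 2*δ) * δ :=
        mul_le_mul hBB hc (norm_nonneg _) (by nlinarith)
  have hsplit : Ai * star Aj - star Aj * Ai
      = Ai * (star Aj - Bj) + (Ai * Bj - Bj * Ai) + (Bj - star Aj) * Ai := by
    noncomm_ring
  have h1 : ‖Ai * (star Aj - Bj)‖ ≤ (5/4) * ((3/2) * δ) :=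
    le_trans (norm_mul_le _ _) (mul_le_mul hAin hdiff (norm_nonneg _) (by norm_num))
  have h3 : ‖(Bj - star Aj) * Ai‖ ≤ ((3/2) * δ) * (5/4) := by
    refine le_trans (norm_mul_le _ _) ?_
    rw [norm_sub_rev]
    exact mul_le_mul hdiff hAin (norm_nonneg _) (by positivity)
  calc ‖Ai * star Aj - star Aj * Ai‖
      = ‖Ai * (star Aj - Bj) + (Ai * Bj - Bj * Ai) + (Bj - star Aj) * Ai‖ := by rw [hsplit]
  _ ≤ ‖Ai * (star Aj - Bj) + (Ai * Bj - Bj * Ai)‖ + ‖(Bj - star Aj) * Ai‖ := norm_add_le _ _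
  _ ≤ ‖Ai * (star Aj - Bj)‖ + ‖Ai * Bj - Bj * Ai‖ + ‖(Bj - star Aj) * Ai‖ := by
      gcongr; exact norm_add_le _ _
  _ ≤ 8 * δ := by nlinarith
end
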